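/- arXiv:2502.20141 — 5 statements merged into one kernel-verified Lean document; each statement's English description precedes it below -/
import Mathlib

section
/- Let B ≥ 1, ε > 0, and let z'_1,…,z'_B and z''_1,…,z''_B be unit vectors in a real inner product space. Define the kernel matrix K by K_{ij} = exp(-(1 - ⟨z'_i, z''_j⟩)/ε) and the row-normalized matrix P by P_{ij} = K_{ij} / Σ_{k=1}^B K_{ik}. Then KL(I ‖ P) = - Σ_{i=1}^B log( exp(⟨z'_i, z''_i⟩/ε) / Σ_{j=1}^B exp(⟨z'_i, z''_j⟩/ε) ), i.e., the KL divergence from the identity matrix to the one-step row-normalized kernel equals the InfoNCE loss. -/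
/-!
The factor `exp (-1/ε)` common to every entry of `K` cancels in the row normalization, so `P` is
the row-wise softmax of the scores `⟪z₁ i, z₂ j⟫ / ε`. Against the identity, the generalized KL
divergence keeps only `-log P i i` from the diagonal and `∑ j, P i j - 1 = 0` from each row.
-/

open Real

namespace Matrix

variable {m n : Type*} [Fintype n]

noncomputable def genKL [Fintype m] (A P : Matrix m n ℝ) : ℝ :=
  ∑ i, ∑ j, (A i j * log (A i j / P i j) - A i j + P i j)

noncomputable def rowNormalize (K : Matrix m n ℝ) : Matrix m n ℝ :=
  fun i j => K i j / ∑ k, K i k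

theorem rowNormalize_smul {c : ℝ} (hc : c ≠ 0) (K : Matrix m n ℝ) :
    rowNormalize (c • K) = rowNormalize K := by
  ext i j
  simp only [rowNormalize, smul_apply, smul_eq_mul, ← Finset.mul_sum,
    mul_div_mul_left _ _ hc]

theorem sum_rowNormalize_eq_one {K : Matrix m n ℝ} {i : m} (hK : ∑ k, K i k ≠ 0) :
    ∑ j, rowNormalize K i j = 1 := by
  simp only [rowNormalize, ← Finset.sum_div, div_self hK]

theorem sum_rowNormalize_map_exp_eq_one (s : Matrix n n ℝ) (i : n) :
    ∑ j, rowNormalize (s.map exp) i j = 1 :=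
  have : Nonempty n := ⟨i⟩
  sum_rowNormalize_eq_one (Finset.sum_pos (fun _ _ => exp_pos _) Finset.univ_nonempty).ne'

variable [DecidableEq n]

theorem genKL_one_left (P : Matrix n n ℝ) :
    genKL 1 P = ∑ i, (-log (P i i) - 1 + ∑ j, P i j) := by
  refine Finset.sum_congr rfl fun i _ => ?_
  rw [← Finset.add_sum_erase _ _ (Finset.mem_univ i),
    ← Finset.add_sum_erase _ _ (Finset.mem_univ i)]
  have hoff : ∀ j ∈ Finset.univ.erase i,
      (1 : Matrix n n ℝ) i j * log ((1 : Matrix n n ℝ) i j / P i j)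
        - (1 : Matrix n n ℝ) i j + P i j = P i j := fun j hj => by
    simp [one_apply_ne' (Finset.ne_of_mem_erase hj)]
  rw [Finset.sum_congr rfl hoff]
  simp [log_inv]

theorem genKL_one_left_of_sum_eq_one {P : Matrix n n ℝ} (hP : ∀ i, ∑ j, P i j = 1) :
    genKL 1 P = -∑ i, log (P i i) := by
  simp [genKL_one_left, hP, Finset.sum_neg_distrib]

end Matrix

open Matrix

theorem gca_ince_equivalence_general
    {E : Type*} [NormedAddCommGroup E] [InnerProductSpace ℝ E]
    (B : ℕ) (ε : ℝ)
    (z₁ z₂ : Fin B → E)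
    (K P : Matrix (Fin B) (Fin B) ℝ)
    (hK : ∀ i j, K i j = Real.exp (-(1 - (inner ℝ (z₁ i) (z₂ j) : ℝ)) / ε))
    (hP : ∀ i j, P i j = K i j / ∑ k, K i k) :
    (∑ i, ∑ j,
        ((1 : Matrix (Fin B) (Fin B) ℝ) i j *
            Real.log ((1 : Matrix (Fin B) (Fin B) ℝ) i j / P i j)
          - (1 : Matrix (Fin B) (Fin B) ℝ) i j + P i j))
      = -∑ i, Real.log (Real.exp ((inner ℝ (z₁ i) (z₂ i) : ℝ) / ε)
          / ∑ j, Real.exp ((inner ℝ (z₁ i) (z₂ j) : ℝ) / ε)) := by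
  set s : Matrix (Fin B) (Fin B) ℝ := fun i j => inner ℝ (z₁ i) (z₂ j) / ε
  have hK_smul : K = exp (-1 / ε) • s.map exp := by
    ext i j
    rw [hK, Matrix.smul_apply, map_apply, smul_eq_mul, ← exp_add]
    congr 1
    simp only [s]
    ring
  have hP_softmax : P = rowNormalize (s.map exp) := by
    rw [← rowNormalize_smul (exp_ne_zero (-1 / ε)), ← hK_smul]
    exact Matrix.ext hP
  change genKL 1 P = _
  rw [genKL_one_left_of_sum_eq_one (hP_softmax ▸ sum_rowNormalize_map_exp_eq_one s), hP_softmax]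
  rfl

/-- KL divergence from the identity matrix to the one-step
row-normalized kernel equals the InfoNCE loss. -/
theorem gca_ince_equivalence
    {E : Type*} [NormedAddCommGroup E] [InnerProductSpace ℝ E]
    (B : ℕ) (hB : 1 ≤ B) (ε : ℝ) (hε : 0 < ε)
    (z₁ z₂ : Fin B → E)
    (hz₁ : ∀ i, ‖z₁ i‖ = 1) (hz₂ : ∀ i, ‖z₂ i‖ = 1)
    (K P : Matrix (Fin B) (Fin B) ℝ)
    (hK : ∀ i j, K i j = Real.exp (-(1 - (inner ℝ (z₁ i) (z₂ j) : ℝ)) / ε))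
    (hP : ∀ i j, P i j = K i j / ∑ k, K i k) :
    (∑ i, ∑ j,
        ((1 : Matrix (Fin B) (Fin B) ℝ) i j *
            Real.log ((1 : Matrix (Fin B) (Fin B) ℝ) i j / P i j)
          - (1 : Matrix (Fin B) (Fin B) ℝ) i j + P i j))
      = -∑ i, Real.log (Real.exp ((inner ℝ (z₁ i) (z₂ i) : ℝ) / ε)
          / ∑ j, Real.exp ((inner ℝ (z₁ i) (z₂ j) : ℝ) / ε)) :=
  gca_ince_equivalence_general B ε z₁ z₂ K P hK hP
end

section
/- Let ε > 0, q ∈ (0,1], λ > 0, B ≥ 1, and let z'_1,…,z'_B and z''_1,…,z''_B be unit vectors in a real inner product space. Set s_{ij} = ⟨z'_i, z''_j⟩/ε, K_{ij} = exp(s_{ij} - 1/ε), u_i = 1 / Σ_{j=1}^B K_{ij} (the one-step Sinkhorn scaling with target marginal 𝟙), and P^{(1)} = diag(u) K. Then for every i, the RINCE loss satisfies (1/q)( -exp(q s_{ii}) + λ^q (Σ_{j=1}^B exp(s_{ij}))^q ) = exp(q/ε) · ( -(1/q) (P^{(1)}_{ii}/u_i)^q + (1/q) (λ/u_i)^q ).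 In particular the RINCE objective equals, up to the positive constant factor exp(q/ε), the GCA objective -(1/q)(diag(P^{(1)})/u)^q + (1/q)(λ/u)^q evaluated at the one-step Bregman projection P^{(1)}. -/
/-!
Every entry of the kernel row `K i ·` is `exp(-1/ε)` times the corresponding entry `exp(s i ·)`.
Dividing the diagonal of `P⁽¹⁾ = diag(u) K` by `u` gives back `K i i`, and `λ / u i = λ ∑ⱼ K i j`,
so the GCA objective at `P⁽¹⁾` is the RINCE loss with both terms rescaled by the same factor
`exp(-1/ε)`. Since `x ↦ x ^ q` is multiplicative on `[0, ∞)`, that factor comes out as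
`exp(-1/ε) ^ q = exp(-q/ε)`.
-/

open Real

theorem sum_exp_sub_const {ι : Type*} [Fintype ι] (s : ι → ℝ) (c : ℝ) :
    ∑ j, exp (s j - c) = exp (-c) * ∑ j, exp (s j) := by
  rw [Finset.mul_sum]
  congr with j
  rw [sub_eq_neg_add, exp_add]

theorem neg_rpow_add_rpow_mul_left {t a b : ℝ} (q : ℝ) (ht : 0 ≤ t) (ha : 0 ≤ a) (hb : 0 ≤ b) :
    -(1 / q) * (t * a) ^ q + (1 / q) * (t * b) ^ q
      = t ^ q * (-(1 / q) * a ^ q + (1 / q) * b ^ q) := by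
  rw [mul_rpow ht ha, mul_rpow ht hb]
  ring

theorem rince_equivalence_general
    (B : ℕ) (ε q lam : ℝ)
    (hlam : 0 < lam)
    (s : Matrix (Fin B) (Fin B) ℝ)
    (K : Matrix (Fin B) (Fin B) ℝ)
    (hK : ∀ i j, K i j = Real.exp (s i j - 1 / ε))
    (u : Fin B → ℝ) (hu : ∀ i, u i = 1 / ∑ j, K i j)
    (P1 : Matrix (Fin B) (Fin B) ℝ)
    (hP1 : ∀ i j, P1 i j = u i * K i j) :
    ∀ i, (1 / q) * (-Real.exp (q * s i i)
            + lam ^ q * (∑ j, Real.exp (s i j)) ^ q)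
      = Real.exp (q / ε) *
          (-(1 / q) * (P1 i i / u i) ^ q + (1 / q) * (lam / u i) ^ q) := by
  intro i
  set S := ∑ j, exp (s i j)
  have hrow : ∑ j, K i j = exp (-(1 / ε)) * S := by
    simp only [hK, sum_exp_sub_const, S]
  have hS : 0 < S := Finset.sum_pos (fun j _ => exp_pos _) ⟨i, Finset.mem_univ i⟩
  have hu_ne : u i ≠ 0 := by rw [hu, hrow]; positivity
  have hdiag : P1 i i / u i = exp (-(1 / ε)) * exp (s i i) := by
    rw [hP1, mul_div_cancel_left₀ _ hu_ne, hK, sub_eq_neg_add, exp_add]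
  have hlam_div : lam / u i = exp (-(1 / ε)) * (lam * S) := by
    rw [hu, div_div_eq_mul_div, div_one, hrow]
    ring
  have hfactor : exp (q / ε) * exp (-(1 / ε)) ^ q = 1 := by
    rw [← exp_mul, ← exp_add]
    ring_nf
    exact exp_zero
  rw [hdiag, hlam_div, neg_rpow_add_rpow_mul_left q (exp_pos _).le (exp_pos _).le
      (by positivity), ← mul_assoc, hfactor, one_mul, ← exp_mul, mul_rpow hlam.le hS.le]
  ring_nf

/-- the RINCE loss equals, up to the positive constant factor
`exp(q/ε)`, the GCA objective evaluated at the one-step Bregman projection. -/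
theorem rince_equivalence
    {E : Type*} [NormedAddCommGroup E] [InnerProductSpace ℝ E]
    (B : ℕ) (hB : 1 ≤ B) (ε q lam : ℝ)
    (hε : 0 < ε) (hq : 0 < q) (hq1 : q ≤ 1) (hlam : 0 < lam)
    (z₁ z₂ : Fin B → E)
    (hz₁ : ∀ i, ‖z₁ i‖ = 1) (hz₂ : ∀ i, ‖z₂ i‖ = 1)
    (s : Matrix (Fin B) (Fin B) ℝ)
    (hs : ∀ i j, s i j = (inner ℝ (z₁ i) (z₂ j) : ℝ) / ε)
    (K : Matrix (Fin B) (Fin B) ℝ)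
    (hK : ∀ i j, K i j = Real.exp (s i j - 1 / ε))
    (u : Fin B → ℝ) (hu : ∀ i, u i = 1 / ∑ j, K i j)
    (P1 : Matrix (Fin B) (Fin B) ℝ)
    (hP1 : ∀ i j, P1 i j = u i * K i j) :
    ∀ i, (1 / q) * (-Real.exp (q * s i i)
            + lam ^ q * (∑ j, Real.exp (s i j)) ^ q)
      = Real.exp (q / ε) *
          (-(1 / q) * (P1 i i / u i) ^ q + (1 / q) * (lam / u i) ^ q) :=
  rince_equivalence_general B ε q lam hlam s K hK u hu P1 hP1
end

section
/- Let K be an n×m matrix with strictly positive entries and let v, v' ∈ ℝ^m be strictly positive vectors. Define η(K) = max_{i,j,k,ℓ} ( K_{ik} K_{jℓ} ) / ( K_{jk} K_{iℓ} ) and λ(K) = ( √(η(K)) - 1 ) / ( √(η(K)) + 1 ) < 1. Then d_H(Kv, Kv') ≤ λ(K) · d_H(v, v'), where d_H is the Hilbert projective metric. -/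
open BigOperators

/-- Hilbert projective metric on strictly positive vectors:
`d_H(u, u') = log max_{i,j} (u_i u'_j)/(u_j u'_i)`. -/
noncomputable def hilbertDist {n : ℕ} (u u' : Fin n → ℝ) : ℝ :=
  Real.log (⨆ p : Fin n × Fin n, (u p.1 * u' p.2) / (u p.2 * u' p.1))

/-- `η(K) = max_{i,j,k,ℓ} (K_{ik} K_{jℓ})/(K_{jk} K_{iℓ})`. -/
noncomputable def etaK {n m : ℕ} (K : Matrix (Fin n) (Fin m) ℝ) : ℝ :=
  ⨆ p : (Fin n × Fin n) × Fin m × Fin m,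
    (K p.1.1 p.2.1 * K p.1.2 p.2.2) / (K p.1.2 p.2.1 * K p.1.1 p.2.2)

/-- `λ(K) = (√η(K) - 1)/(√η(K) + 1)`. -/
noncomputable def lamK {n m : ℕ} (K : Matrix (Fin n) (Fin m) ℝ) : ℝ :=
  (Real.sqrt (etaK K) - 1) / (Real.sqrt (etaK K) + 1)

/-!
Put `x = exp (d_H(v, v') / 2)` and `y = √η(K)`. After rescaling `v'`, we have `v' ≤ v ≤ x² v'`
coordinatewise, and any two rows `a, b` of `K` satisfy `a_j b_k ≤ y² a_k b_j`. Splitting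
`⟨a, v⟩ = ⟨a, v'⟩ + ⟨a, v - v'⟩`, and `⟨a, x² v' - v⟩` likewise, these two facts bound every
cross ratio `(Kv)_i (Kv')_{i'} / ((Kv)_{i'} (Kv')_i)` by `((1 + xy)/(x + y))²` through a
polynomial inequality. Finally `log ((1 + xy)/(x + y)) ≤ λ(K) log x`: both sides vanish at
`x = 1`, and the derivative in `log x` of their difference is
`y (y - 1) (x - 1)² / ((y + 1)(1 + xy)(x + y)) ≥ 0`.
-/

open Real

section HilbertDist

variable {n : ℕ} {u u' : Fin n → ℝ}

theorem mul_le_exp_hilbertDist_mul (hu : ∀ i, 0 < u i) (hu' : ∀ i, 0 < u' i) (i j : Fin n) :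
    u i * u' j ≤ exp (hilbertDist u u') * (u j * u' i) := by
  have hpos : 0 < u j * u' i := mul_pos (hu j) (hu' i)
  have hle : u i * u' j / (u j * u' i) ≤
      ⨆ p : Fin n × Fin n, (u p.1 * u' p.2) / (u p.2 * u' p.1) :=
    Finite.le_ciSup_of_le (i, j) le_rfl
  rw [hilbertDist, exp_log (lt_of_lt_of_le (by have := hu i; have := hu' j; positivity) hle)]
  rwa [div_le_iff₀ hpos] at hle

theorem hilbertDist_nonneg [NeZero n] (hu : ∀ i, 0 < u i) (hu' : ∀ i, 0 < u' i) :
    0 ≤ hilbertDist u u' := by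
  have h := mul_le_exp_hilbertDist_mul hu hu' 0 0
  rw [le_mul_iff_one_le_left (mul_pos (hu 0) (hu' 0))] at h
  exact one_le_exp_iff.1 h

theorem hilbertDist_le_of_forall_mul_le [NeZero n] (hu : ∀ i, 0 < u i) (hu' : ∀ i, 0 < u' i)
    {c : ℝ} (h : ∀ i j, u i * u' j ≤ exp c * (u j * u' i)) : hilbertDist u u' ≤ c := by
  have hdiag : 0 < u 0 * u' 0 / (u 0 * u' 0) := by have := hu 0; have := hu' 0; positivity
  rw [hilbertDist, log_le_iff_le_exp (lt_of_lt_of_le hdiag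
    (Finite.le_ciSup_of_le (0, 0) le_rfl))]
  exact ciSup_le fun p => (div_le_iff₀ (mul_pos (hu p.2) (hu' p.1))).2 (h p.1 p.2)

theorem exists_pos_mul_le_le_exp_hilbertDist_mul [NeZero n] (hu : ∀ i, 0 < u i)
    (hu' : ∀ i, 0 < u' i) :
    ∃ ρ > 0, ∀ j, ρ * u' j ≤ u j ∧ u j ≤ exp (hilbertDist u u') * ρ * u' j := by
  obtain ⟨j₀, hj₀⟩ := Finite.exists_min fun j => u j / u' j
  refine ⟨u j₀ / u' j₀, div_pos (hu j₀) (hu' j₀), fun j => ⟨?_, ?_⟩⟩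
  · exact (le_div_iff₀ (hu' j)).1 (hj₀ j)
  · have h := mul_le_exp_hilbertDist_mul hu hu' j j₀
    rw [mul_div_assoc', div_mul_eq_mul_div, le_div_iff₀ (hu' j₀)]
    linarith

end HilbertDist

section Eta

variable {n m : ℕ} {K : Matrix (Fin n) (Fin m) ℝ}

theorem mul_le_etaK_mul (hK : ∀ i j, 0 < K i j) (i i' : Fin n) (k l : Fin m) :
    K i k * K i' l ≤ etaK K * (K i' k * K i l) := by
  have h : K i k * K i' l / (K i' k * K i l) ≤ etaK K :=
    Finite.le_ciSup_of_le ((i, i'), (k, l)) le_rfl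
  rwa [div_le_iff₀ (mul_pos (hK i' k) (hK i l))] at h

theorem one_le_etaK [NeZero n] [NeZero m] (hK : ∀ i j, 0 < K i j) : 1 ≤ etaK K :=
  (le_mul_iff_one_le_left (mul_pos (hK 0 0) (hK 0 0))).1 (mul_le_etaK_mul hK 0 0 0 0)

theorem lamK_lt_one (K : Matrix (Fin n) (Fin m) ℝ) : lamK K < 1 := by
  have := sqrt_nonneg (etaK K)
  rw [lamK, div_lt_one (by linarith)]
  linarith

end Eta

theorem birkhoff_quadratic_ineq {x y P Q U W : ℝ} (hx : 1 ≤ x) (hy : 1 ≤ y)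
    (hP : 0 < P) (hQ : 0 < Q) (hU : 0 ≤ U) (hW : 0 ≤ W)
    (hU' : U ≤ (x ^ 2 - 1) * P) (hW' : W ≤ (x ^ 2 - 1) * Q)
    (hcross : U * ((x ^ 2 - 1) * Q - W) ≤ y ^ 2 * (W * ((x ^ 2 - 1) * P - U))) :
    (P + U) * Q * (x + y) ^ 2 ≤ (1 + x * y) ^ 2 * ((Q + W) * P) := by
  rcases hx.eq_or_lt with rfl | hx
  · obtain rfl : U = 0 := le_antisymm (by simpa using hU') hU
    obtain rfl : W = 0 := le_antisymm (by simpa using hW') hW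
    exact le_of_eq (by ring)
  have hM : 0 < (x ^ 2 - 1) * Q - W + y ^ 2 * W := by
    nlinarith [mul_pos (show (0 : ℝ) < x ^ 2 - 1 by nlinarith) hQ,
      mul_nonneg (show (0 : ℝ) ≤ y ^ 2 - 1 by nlinarith) hW]
  have hid : ((1 + x * y) ^ 2 * ((Q + W) * P) - (P + U) * Q * (x + y) ^ 2)
        * ((x ^ 2 - 1) * Q - W + y ^ 2 * W)
      = (x + y) ^ 2 * Q * (y ^ 2 * (W * ((x ^ 2 - 1) * P - U)) - U * ((x ^ 2 - 1) * Q - W))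
        + (y ^ 2 - 1) * P * ((x ^ 2 - 1) * Q - W - x * y * W) ^ 2 := by ring
  have hprod : 0 ≤ ((1 + x * y) ^ 2 * ((Q + W) * P) - (P + U) * Q * (x + y) ^ 2)
      * ((x ^ 2 - 1) * Q - W + y ^ 2 * W) := by
    have : 0 ≤ y ^ 2 - 1 := by nlinarith
    have := sub_nonneg.2 hcross
    rw [hid]
    positivity
  exact sub_nonneg.1 (nonneg_of_mul_nonneg_left hprod hM)

theorem sum_mul_sum_mul_add_sq_le {ι : Type*} [Fintype ι] [Nonempty ι] {a b v v' : ι → ℝ}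
    {ρ x y : ℝ} (ha : ∀ j, 0 < a j) (hb : ∀ j, 0 < b j) (hv' : ∀ j, 0 < v' j) (hρ : 0 < ρ)
    (hx : 1 ≤ x) (hy : 1 ≤ y) (hlo : ∀ j, ρ * v' j ≤ v j) (hhi : ∀ j, v j ≤ x ^ 2 * ρ * v' j)
    (hab : ∀ j k, a j * b k ≤ y ^ 2 * (a k * b j)) :
    (∑ j, a j * v j) * (∑ j, b j * v' j) * (x + y) ^ 2
      ≤ (1 + x * y) ^ 2 * ((∑ j, b j * v j) * (∑ j, a j * v' j)) := by
  have split_lo : ∀ c : ι → ℝ,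
      ∑ j, c j * v j = ρ * ∑ j, c j * v' j + ∑ j, c j * (v j - ρ * v' j) := fun c => by
    rw [Finset.mul_sum, ← Finset.sum_add_distrib]
    exact Finset.sum_congr rfl fun j _ => by ring
  have split_hi : ∀ c : ι → ℝ, ∑ j, c j * (x ^ 2 * ρ * v' j - v j)
      = (x ^ 2 - 1) * (ρ * ∑ j, c j * v' j) - ∑ j, c j * (v j - ρ * v' j) := fun c => by
    rw [Finset.mul_sum, Finset.mul_sum, ← Finset.sum_sub_distrib]
    exact Finset.sum_congr rfl fun j _ => by ring
  have nonneg_lo : ∀ c : ι → ℝ, (∀ j, 0 < c j) → 0 ≤ ∑ j, c j * (v j - ρ * v' j) :=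
    fun c hc => Finset.sum_nonneg fun j _ => mul_nonneg (hc j).le (by linarith [hlo j])
  have nonneg_hi : ∀ c : ι → ℝ, (∀ j, 0 < c j) → 0 ≤ ∑ j, c j * (x ^ 2 * ρ * v' j - v j) :=
    fun c hc => Finset.sum_nonneg fun j _ => mul_nonneg (hc j).le (by linarith [hhi j])
  have hpos : ∀ c : ι → ℝ, (∀ j, 0 < c j) → 0 < ρ * ∑ j, c j * v' j := fun c hc =>
    mul_pos hρ (Finset.sum_pos (fun j _ => mul_pos (hc j) (hv' j)) Finset.univ_nonempty)
  have hcross : (∑ j, a j * (v j - ρ * v' j)) * ∑ k, b k * (x ^ 2 * ρ * v' k - v k)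
      ≤ y ^ 2 * ((∑ j, b j * (v j - ρ * v' j)) * ∑ k, a k * (x ^ 2 * ρ * v' k - v k)) := by
    rw [Finset.sum_mul_sum, Finset.sum_mul_sum, Finset.mul_sum]
    refine Finset.sum_le_sum fun j _ => ?_
    rw [Finset.mul_sum]
    refine Finset.sum_le_sum fun k _ => ?_
    have hjk : 0 ≤ (v j - ρ * v' j) * (x ^ 2 * ρ * v' k - v k) :=
      mul_nonneg (by linarith [hlo j]) (by linarith [hhi k])
    calc a j * (v j - ρ * v' j) * (b k * (x ^ 2 * ρ * v' k - v k))
        = (a j * b k) * ((v j - ρ * v' j) * (x ^ 2 * ρ * v' k - v k)) := by ring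
      _ ≤ (y ^ 2 * (a k * b j)) * ((v j - ρ * v' j) * (x ^ 2 * ρ * v' k - v k)) :=
          mul_le_mul_of_nonneg_right (hab j k) hjk
      _ = y ^ 2 * (b j * (v j - ρ * v' j) * (a k * (x ^ 2 * ρ * v' k - v k))) := by ring
  have key := birkhoff_quadratic_ineq hx hy (hpos a ha) (hpos b hb) (nonneg_lo a ha)
    (nonneg_lo b hb) (by linarith [split_hi a, nonneg_hi a ha])
    (by linarith [split_hi b, nonneg_hi b hb]) (by rwa [split_hi a, split_hi b] at hcross)
  rw [← split_lo, ← split_lo] at key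
  refine le_of_mul_le_mul_left ?_ hρ
  linarith

theorem one_add_exp_mul_le {a y : ℝ} (ha : 0 ≤ a) (hy : 1 ≤ y) :
    1 + exp a * y ≤ exp ((y - 1) / (y + 1) * a) * (exp a + y) := by
  set c := (y - 1) / (y + 1) with hc
  have h₁ : ∀ s, 0 < 1 + exp s * y := fun s => by have := exp_pos s; nlinarith
  have h₂ : ∀ s, 0 < exp s + y := fun s => by have := exp_pos s; linarith
  let f : ℝ → ℝ := fun s => c * s - log (1 + exp s * y) + log (exp s + y)
  have hf : ∀ s, HasDerivAt f (c * 1 - exp s * y / (1 + exp s * y) + exp s / (exp s + y)) s :=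
    fun s => (((hasDerivAt_id s).const_mul c).sub
      ((((hasDerivAt_exp s).mul_const y).const_add 1).log (h₁ s).ne')).add
      (((hasDerivAt_exp s).add_const y).log (h₂ s).ne')
  have hmono : Monotone f := monotone_of_hasDerivAt_nonneg hf fun s => by
    have hform : c * 1 - exp s * y / (1 + exp s * y) + exp s / (exp s + y)
        = y * (y - 1) * (exp s - 1) ^ 2 / ((y + 1) * (1 + exp s * y) * (exp s + y)) := by
      have := h₁ s; have := h₂ s
      rw [hc]
      field_simp
      ring
    have := h₁ s; have := h₂ s
    rw [Pi.zero_apply, hform]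
    have : 0 ≤ y - 1 := by linarith
    positivity
  have hf0a : f 0 ≤ f a := hmono ha
  rw [← log_le_log_iff (h₁ a) (mul_pos (exp_pos _) (h₂ a)), log_mul (exp_pos _).ne' (h₂ a).ne',
    log_exp]
  simp only [f, mul_zero, exp_zero, one_mul, zero_sub, add_comm (1 : ℝ) y] at hf0a
  linarith

/-- Birkhoff contraction of a positive kernel in the Hilbert
projective metric: `d_H(Kv, Kv') ≤ λ(K) d_H(v, v')`, with `λ(K) < 1`. -/
theorem birkhoff_contraction
    (n m : ℕ) (hn : 0 < n) (hm : 0 < m)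
    (K : Matrix (Fin n) (Fin m) ℝ) (hK : ∀ i j, 0 < K i j)
    (v v' : Fin m → ℝ) (hv : ∀ j, 0 < v j) (hv' : ∀ j, 0 < v' j) :
    lamK K < 1 ∧
    hilbertDist (fun i => ∑ j, K i j * v j) (fun i => ∑ j, K i j * v' j)
      ≤ lamK K * hilbertDist v v' := by
  have := NeZero.of_pos hn
  have := NeZero.of_pos hm
  set d := hilbertDist v v'
  set x := exp (d / 2)
  set y := √(etaK K)
  have hd : 0 ≤ d := hilbertDist_nonneg hv hv'
  have hx : 1 ≤ x := one_le_exp (by positivity)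
  have hx2 : x ^ 2 = exp d := by rw [← exp_nat_mul]; ring_nf
  have hy : 1 ≤ y := one_le_sqrt.2 (one_le_etaK hK)
  have hy2 : y ^ 2 = etaK K := sq_sqrt (by linarith [one_le_etaK hK])
  have hrate : (1 + x * y) ^ 2 ≤ exp (lamK K * d) * (x + y) ^ 2 := by
    calc (1 + x * y) ^ 2 ≤ (exp (lamK K * (d / 2)) * (x + y)) ^ 2 :=
          pow_le_pow_left₀ (by positivity) (one_add_exp_mul_le (by positivity) hy) 2
      _ = exp (lamK K * d) * (x + y) ^ 2 := by rw [mul_pow, ← exp_nat_mul]; ring_nf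
  obtain ⟨ρ, hρ, hsandwich⟩ := exists_pos_mul_le_le_exp_hilbertDist_mul hv hv'
  have hKpos : ∀ u : Fin m → ℝ, (∀ j, 0 < u j) → ∀ i, 0 < ∑ j, K i j * u j := fun u hu i =>
    Finset.sum_pos (fun j _ => mul_pos (hK i j) (hu j)) Finset.univ_nonempty
  refine ⟨lamK_lt_one K,
    hilbertDist_le_of_forall_mul_le (hKpos v hv) (hKpos v' hv') fun i i' => ?_⟩
  have hrows := sum_mul_sum_mul_add_sq_le (hK i) (hK i') hv' hρ hx hy
    (fun j => (hsandwich j).1) (fun j => hx2 ▸ (hsandwich j).2)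
    (fun j k => hy2 ▸ by linarith [mul_le_etaK_mul hK i i' j k])
  have hD := mul_pos (hKpos v hv i') (hKpos v' hv' i)
  refine le_of_mul_le_mul_right ?_ (by positivity : (0 : ℝ) < (x + y) ^ 2)
  calc _ ≤ _ := hrows
    _ ≤ exp (lamK K * d) * (x + y) ^ 2 * ((∑ j, K i' j * v j) * ∑ j, K i j * v' j) :=
        mul_le_mul_of_nonneg_right hrate hD.le
    _ = _ := by ring
end

section
/- Let ε > 0, let μ ∈ ℝ^n and ν ∈ ℝ^m be strictly positive probability vectors (Σ_i μ_i = 1, Σ_j ν_j = 1), and let C be an n×m real matrix. Then the entropic optimal transport problem min over nonnegative n×m matrices P with P𝟙 = μ and Pᵀ𝟙 = ν of Σ_{i,j} C_{ij} P_{ij} + ε Σ_{i,j} P_{ij} log( P_{ij} / ( μ_i ν_j ) ) equals the dual value sup over f ∈ ℝ^n, g ∈ ℝ^m of Σ_i f_i μ_i + Σ_j g_j ν_j - ε Σ_{i,j} exp( ( f_i + g_j - C_{ij} ) / ε ) μ_i ν_j + ε, and both the minimum and the supremum are attained. -/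
/-!
A minimiser `P` of the primal problem exists because the transport polytope is compact. Its
entries are positive: the entropy has slope `-∞` at a vanishing entry, so moving slightly towards
`μ ⊗ ν` would lower the cost. Thus `P` is interior, and first-order optimality along the
directions `u ⊗ w` with `∑ u = ∑ w = 0` forces the gradient `C i j + ε log (P i j / (μ i ν j))`
to be of the form `f i + g j`. For these potentials `P i j = μ i ν j exp ((f i + g j - C i j) / ε)`,
which is the equality case of the entrywise Fenchel–Young inequality
`x y ≤ x log (x / c) - x + c exp y`; the same inequality gives weak duality.
-/

open Real Finset Filter Topology

lemma mul_log_div_eq_mul_mul_log (x c : ℝ) : x * log (x / c) = c * ((x / c) * log (x / c)) := by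
  rcases eq_or_ne c 0 with rfl | hc
  · simp
  · rw [← mul_assoc, mul_div_cancel₀ x hc]

lemma continuous_mul_log_div (c : ℝ) : Continuous fun x : ℝ => x * log (x / c) := by
  simp only [mul_log_div_eq_mul_mul_log _ c]
  exact continuous_const.mul (continuous_mul_log.comp (continuous_id.div_const c))

lemma hasDerivAt_mul_log_div {x c : ℝ} (hx : x ≠ 0) (hc : c ≠ 0) :
    HasDerivAt (fun x => x * log (x / c)) (log (x / c) + 1) x := by
  refine ((hasDerivAt_id' x).fun_mul
    (((hasDerivAt_id' x).div_const c).log (div_ne_zero hx hc))).congr_deriv ?_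
  rw [one_mul, div_div_div_cancel_right₀ hc, mul_one_div_cancel hx]

lemma mul_le_mul_log_div_sub_add_mul_exp {x c : ℝ} (y : ℝ) (hx : 0 ≤ x) (hc : 0 < c) :
    x * y ≤ x * log (x / c) - x + c * exp y := by
  rcases hx.eq_or_lt with rfl | hx
  · simp only [zero_mul, zero_sub]; positivity
  · have h := mul_le_mul_of_nonneg_left (add_one_le_exp (y - log (x / c))) hx.le
    rw [exp_sub, exp_log (div_pos hx hc), div_div_eq_mul_div, mul_div_cancel₀ _ hx.ne'] at h
    linarith

lemma mul_log_div_lineMap_le {x c t : ℝ} (hx : 0 ≤ x) (hc : 0 < c) (ht0 : 0 ≤ t) (ht1 : t ≤ 1) :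
    ((1 - t) * x + t * c) * log (((1 - t) * x + t * c) / c) ≤ (1 - t) * (x * log (x / c)) := by
  have h := convexOn_mul_log.2 (Set.mem_Ici.2 (div_nonneg hx hc.le)) (Set.mem_Ici.2 zero_le_one)
    (sub_nonneg.2 ht1) ht0 (by ring)
  simp only [smul_eq_mul, mul_one, log_one, mul_zero, add_zero] at h
  have e : ((1 - t) * x + t * c) / c = (1 - t) * (x / c) + t := by field_simp
  rw [mul_log_div_eq_mul_mul_log, e, mul_log_div_eq_mul_mul_log x c]
  calc c * (((1 - t) * (x / c) + t) * log ((1 - t) * (x / c) + t))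
      ≤ c * ((1 - t) * (x / c * log (x / c))) := mul_le_mul_of_nonneg_left h hc.le
    _ = (1 - t) * (c * (x / c * log (x / c))) := by ring

section

variable {ι κ : Type*} [Fintype ι] [Fintype κ]

def couplings (μ : ι → ℝ) (ν : κ → ℝ) : Set (Matrix ι κ ℝ) :=
  {P | (∀ i j, 0 ≤ P i j) ∧ (∀ i, ∑ j, P i j = μ i) ∧ (∀ j, ∑ i, P i j = ν j)}

lemma vecMulVec_mem_couplings {μ : ι → ℝ} {ν : κ → ℝ} (hμ : ∀ i, 0 ≤ μ i) (hν : ∀ j, 0 ≤ ν j)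
    (hμ1 : ∑ i, μ i = 1) (hν1 : ∑ j, ν j = 1) : Matrix.vecMulVec μ ν ∈ couplings μ ν := by
  refine ⟨fun i j => mul_nonneg (hμ i) (hν j), fun i => ?_, fun j => ?_⟩
  · simp only [Matrix.vecMulVec_apply, ← mul_sum, hν1, mul_one]
  · simp only [Matrix.vecMulVec_apply, ← sum_mul, hμ1, one_mul]

lemma convex_couplings (μ : ι → ℝ) (ν : κ → ℝ) : Convex ℝ (couplings μ ν) := by
  rintro P ⟨hP0, hPr, hPc⟩ Q ⟨hQ0, hQr, hQc⟩ a b ha hb hab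
  refine ⟨fun i j => ?_, fun i => ?_, fun j => ?_⟩
  · simp only [Matrix.add_apply, Matrix.smul_apply, smul_eq_mul]
    exact add_nonneg (mul_nonneg ha (hP0 i j)) (mul_nonneg hb (hQ0 i j))
  all_goals simp only [Matrix.add_apply, Matrix.smul_apply, smul_eq_mul, sum_add_distrib,
    ← mul_sum, hPr, hQr, hPc, hQc, ← add_mul, hab, one_mul]

lemma isCompact_couplings (μ : ι → ℝ) (ν : κ → ℝ) : IsCompact (couplings μ ν) := by
  have hclosed : IsClosed (couplings μ ν) := by
    simp only [couplings, Set.ofPred_and, Set.ofPred_forall]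
    refine .inter (isClosed_iInter fun i => isClosed_iInter fun j =>
      isClosed_le continuous_const (continuous_apply_apply i j)) (.inter ?_ ?_)
    · exact isClosed_iInter fun i =>
        isClosed_eq (continuous_finsetSum _ fun j _ => continuous_apply_apply i j) continuous_const
    · exact isClosed_iInter fun j =>
        isClosed_eq (continuous_finsetSum _ fun i _ => continuous_apply_apply i j) continuous_const
  refine (isCompact_univ_pi fun i => isCompact_univ_pi fun _ => isCompact_Icc (a := 0) (b := μ i))
    |>.of_isClosed_subset hclosed ?_
  rintro P ⟨hP0, hPr, -⟩ i - j -
  exact ⟨hP0 i j, hPr i ▸ single_le_sum (fun j _ => hP0 i j) (mem_univ j)⟩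

lemma sum_sum_add_mul_eq_of_mem_couplings {μ : ι → ℝ} {ν : κ → ℝ} {P : Matrix ι κ ℝ}
    (hP : P ∈ couplings μ ν) (f : ι → ℝ) (g : κ → ℝ) :
    ∑ i, ∑ j, (f i + g j) * P i j = ∑ i, f i * μ i + ∑ j, g j * ν j := by
  simp only [add_mul, sum_add_distrib, ← mul_sum, hP.2.1]
  rw [sum_comm]
  simp only [← mul_sum, hP.2.2]

lemma eventually_add_smul_vecMulVec_mem_couplings {μ : ι → ℝ} {ν : κ → ℝ} {P : Matrix ι κ ℝ}
    (hP : P ∈ couplings μ ν) (hPpos : ∀ i j, 0 < P i j) {u : ι → ℝ} {w : κ → ℝ}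
    (hu : ∑ i, u i = 0) (hw : ∑ j, w j = 0) :
    ∀ᶠ t in 𝓝 (0 : ℝ), P + t • Matrix.vecMulVec u w ∈ couplings μ ν := by
  have hpos : ∀ᶠ t in 𝓝 (0 : ℝ), ∀ i j, 0 < P i j + t * (u i * w j) := by
    refine eventually_all.2 fun i => eventually_all.2 fun j => ?_
    have h : Continuous fun t : ℝ => P i j + t * (u i * w j) := by fun_prop
    exact (h.tendsto' 0 (P i j) (by simp)).eventually_const_lt (hPpos i j)
  filter_upwards [hpos] with t ht
  refine ⟨fun i j => (ht i j).le, fun i => ?_, fun j => ?_⟩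
  all_goals simp only [Matrix.add_apply, Matrix.smul_apply, Matrix.vecMulVec_apply, smul_eq_mul,
    sum_add_distrib, hP.2.1, hP.2.2, ← mul_sum, ← sum_mul, hu, hw, zero_mul, mul_zero, add_zero]

lemma exists_eq_add_of_sum_sum_mul_eq_zero (X : Matrix ι κ ℝ)
    (hX : ∀ (u : ι → ℝ) (w : κ → ℝ), ∑ i, u i = 0 → ∑ j, w j = 0 →
      ∑ i, ∑ j, u i * w j * X i j = 0) :
    ∃ (f : ι → ℝ) (g : κ → ℝ), ∀ i j, X i j = f i + g j := by
  classical
  rcases isEmpty_or_nonempty ι with _ | ⟨⟨i₀⟩⟩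
  · exact ⟨0, 0, isEmptyElim⟩
  rcases isEmpty_or_nonempty κ with _ | ⟨⟨j₀⟩⟩
  · exact ⟨0, 0, fun _ => isEmptyElim⟩
  refine ⟨fun i => X i j₀ - X i₀ j₀, fun j => X i₀ j, fun i j => ?_⟩
  have h := hX (Pi.single i 1 - Pi.single i₀ 1) (Pi.single j 1 - Pi.single j₀ 1)
    (by simp) (by simp)
  simp only [Pi.sub_apply, Pi.single_apply, mul_sub, mul_ite, mul_one, mul_zero, sub_mul, ite_mul,
    one_mul, zero_mul, sum_sub_distrib, sum_ite_eq', mem_univ, ↓reduceIte] at h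
  linarith

variable (ε : ℝ) (μ : ι → ℝ) (ν : κ → ℝ) (C : Matrix ι κ ℝ)

noncomputable def entropicCost (P : Matrix ι κ ℝ) : ℝ :=
  (∑ i, ∑ j, C i j * P i j) + ε * ∑ i, ∑ j, P i j * log (P i j / (μ i * ν j))

noncomputable def entropicDual (f : ι → ℝ) (g : κ → ℝ) : ℝ :=
  (∑ i, f i * μ i) + (∑ j, g j * ν j)
    - ε * (∑ i, ∑ j, exp ((f i + g j - C i j) / ε) * (μ i * ν j)) + ε

lemma entropicCost_eq_sum_sum (P : Matrix ι κ ℝ) :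
    entropicCost ε μ ν C P
      = ∑ i, ∑ j, (C i j * P i j + ε * (P i j * log (P i j / (μ i * ν j)))) := by
  simp only [entropicCost, mul_sum, sum_add_distrib]

lemma entropicDual_eq_sum_sum {P : Matrix ι κ ℝ} (hP : P ∈ couplings μ ν) (hμ1 : ∑ i, μ i = 1)
    (f : ι → ℝ) (g : κ → ℝ) :
    entropicDual ε μ ν C f g = ∑ i, ∑ j, ((f i + g j) * P i j
      - ε * (exp ((f i + g j - C i j) / ε) * (μ i * ν j)) + ε * P i j) := by
  have hP1 : ∑ i, ∑ j, P i j = 1 := by simp only [hP.2.1, hμ1]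
  simp only [entropicDual, sum_add_distrib, sum_sub_distrib, ← mul_sum, hP1,
    sum_sum_add_mul_eq_of_mem_couplings hP, mul_one]

lemma continuous_entropicCost : Continuous (entropicCost ε μ ν C) := by
  have hentry : ∀ i j, Continuous fun P : Matrix ι κ ℝ => P i j := continuous_apply_apply
  have hlog : ∀ i j, Continuous fun P : Matrix ι κ ℝ => P i j * log (P i j / (μ i * ν j)) :=
    fun i j => (continuous_mul_log_div _).comp (hentry i j)
  unfold entropicCost
  fun_prop

variable {ε μ ν}

lemma exists_isMinOn_entropicCost (hμ : ∀ i, 0 ≤ μ i) (hν : ∀ j, 0 ≤ ν j)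
    (hμ1 : ∑ i, μ i = 1) (hν1 : ∑ j, ν j = 1) :
    ∃ P ∈ couplings μ ν, IsMinOn (entropicCost ε μ ν C) (couplings μ ν) P :=
  (isCompact_couplings μ ν).exists_isMinOn ⟨_, vecMulVec_mem_couplings hμ hν hμ1 hν1⟩
    (continuous_entropicCost ε μ ν C).continuousOn

lemma entropicCost_lineMap_le (hε : 0 ≤ ε) (hμ : ∀ i, 0 < μ i) (hν : ∀ j, 0 < ν j)
    {P : Matrix ι κ ℝ} (hP : ∀ i j, 0 ≤ P i j) {a : ι} {b : κ} (hab : P a b = 0)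
    {t : ℝ} (ht0 : 0 < t) (ht1 : t ≤ 1) :
    entropicCost ε μ ν C ((1 - t) • P + t • Matrix.vecMulVec μ ν)
      ≤ (1 - t) * entropicCost ε μ ν C P + t * ∑ i, ∑ j, C i j * (μ i * ν j)
        + ε * (μ a * ν b * (t * log t)) := by
  classical
  have hentry : ∀ i j, ((1 - t) * P i j + t * (μ i * ν j))
      * log (((1 - t) * P i j + t * (μ i * ν j)) / (μ i * ν j))
      ≤ (1 - t) * (P i j * log (P i j / (μ i * ν j)))
        + if i = a ∧ j = b then μ a * ν b * (t * log t) else 0 := by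
    intro i j
    have hc : 0 < μ i * ν j := mul_pos (hμ i) (hν j)
    split_ifs with h
    · obtain ⟨rfl, rfl⟩ := h
      rw [hab, mul_zero, zero_add, mul_div_cancel_right₀ _ hc.ne', zero_mul]
      exact le_of_eq (by ring)
    · rw [add_zero]
      exact mul_log_div_lineMap_le (hP i j) hc ht0.le ht1
  have hent : ∑ i, ∑ j, ((1 - t) * P i j + t * (μ i * ν j))
      * log (((1 - t) * P i j + t * (μ i * ν j)) / (μ i * ν j))
      ≤ (1 - t) * ∑ i, ∑ j, P i j * log (P i j / (μ i * ν j)) + μ a * ν b * (t * log t) := by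
    refine (sum_le_sum fun i _ => sum_le_sum fun j _ => hentry i j).trans_eq ?_
    simp [sum_add_distrib, mul_sum, ite_and]
  have hlin : ∑ i, ∑ j, C i j * ((1 - t) * P i j + t * (μ i * ν j))
      = (1 - t) * ∑ i, ∑ j, C i j * P i j + t * ∑ i, ∑ j, C i j * (μ i * ν j) := by
    simp only [mul_add, mul_left_comm (C _ _), sum_add_distrib, ← mul_sum]
  simp only [entropicCost, Matrix.add_apply, Matrix.smul_apply, Matrix.vecMulVec_apply,
    smul_eq_mul, hlin]
  linarith [mul_le_mul_of_nonneg_left hent hε]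

lemma pos_of_isMinOn_entropicCost (hε : 0 < ε) (hμ : ∀ i, 0 < μ i) (hν : ∀ j, 0 < ν j)
    (hμ1 : ∑ i, μ i = 1) (hν1 : ∑ j, ν j = 1) {P : Matrix ι κ ℝ} (hP : P ∈ couplings μ ν)
    (hmin : IsMinOn (entropicCost ε μ ν C) (couplings μ ν) P) (a : ι) (b : κ) :
    0 < P a b := by
  by_contra! hab
  replace hab : P a b = 0 := le_antisymm hab (hP.1 a b)
  set D := entropicCost ε μ ν C P - ∑ i, ∑ j, C i j * (μ i * ν j)
  have hc : 0 < ε * (μ a * ν b) := mul_pos hε (mul_pos (hμ a) (hν b))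
  have hD : ∀ t : ℝ, 0 < t → t ≤ 1 → D ≤ ε * (μ a * ν b) * log t := by
    intro t ht0 ht1
    have hmem : (1 - t) • P + t • Matrix.vecMulVec μ ν ∈ couplings μ ν :=
      convex_couplings μ ν hP
        (vecMulVec_mem_couplings (fun i => (hμ i).le) (fun j => (hν j).le) hμ1 hν1)
        (sub_nonneg.2 ht1) ht0.le (sub_add_cancel 1 t)
    have h := (hmin hmem).trans (entropicCost_lineMap_le C hε.le hμ hν hP.1 hab ht0 ht1)
    refine le_of_mul_le_mul_left ?_ ht0
    linarith
  set t := exp (-(|D| + 1) / (ε * (μ a * ν b)))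
  have ht1 : t ≤ 1 :=
    exp_le_one_iff.2 (div_nonpos_of_nonpos_of_nonneg (neg_nonpos.2 (by positivity)) hc.le)
  have h := hD t (exp_pos _) ht1
  rw [log_exp, mul_div_cancel₀ _ hc.ne'] at h
  linarith [neg_abs_le D]

lemma hasDerivAt_entropicCost_add_smul (hμ : ∀ i, μ i ≠ 0) (hν : ∀ j, ν j ≠ 0)
    {P : Matrix ι κ ℝ} (hP : ∀ i j, P i j ≠ 0) (D : Matrix ι κ ℝ) :
    HasDerivAt (fun t : ℝ => entropicCost ε μ ν C (P + t • D))
      (∑ i, ∑ j, D i j * (C i j + ε * (log (P i j / (μ i * ν j)) + 1))) 0 := by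
  have hline : ∀ i j, HasDerivAt (fun t : ℝ => P i j + t * D i j) (D i j) 0 := fun i j => by
    simpa using ((hasDerivAt_id' (0 : ℝ)).mul_const (D i j)).const_add (P i j)
  have hlin := HasDerivAt.fun_sum fun i (_ : i ∈ univ) => HasDerivAt.fun_sum fun j (_ : j ∈ univ) =>
    (hline i j).const_mul (C i j)
  have hent := HasDerivAt.fun_sum fun i (_ : i ∈ univ) => HasDerivAt.fun_sum fun j (_ : j ∈ univ) =>
    (hasDerivAt_mul_log_div (x := P i j + 0 * D i j) (by simpa using hP i j)
      (mul_ne_zero (hμ i) (hν j))).comp 0 (hline i j)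
  refine (hlin.fun_add (hent.const_mul ε)).congr_deriv ?_
  simp only [zero_mul, add_zero, mul_sum, ← sum_add_distrib]
  exact sum_congr rfl fun i _ => sum_congr rfl fun j _ => by ring

lemma sum_sum_mul_eq_zero_of_isMinOn (hμ : ∀ i, 0 < μ i) (hν : ∀ j, 0 < ν j)
    {P : Matrix ι κ ℝ} (hP : P ∈ couplings μ ν) (hPpos : ∀ i j, 0 < P i j)
    (hmin : IsMinOn (entropicCost ε μ ν C) (couplings μ ν) P) {u : ι → ℝ} {w : κ → ℝ}
    (hu : ∑ i, u i = 0) (hw : ∑ j, w j = 0) :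
    ∑ i, ∑ j, u i * w j * (C i j + ε * log (P i j / (μ i * ν j))) = 0 := by
  have hloc : IsLocalMin (fun t : ℝ => entropicCost ε μ ν C (P + t • Matrix.vecMulVec u w)) 0 :=
    (eventually_add_smul_vecMulVec_mem_couplings hP hPpos hu hw).mono fun t ht => by
      simpa using hmin ht
  have h := hloc.hasDerivAt_eq_zero (hasDerivAt_entropicCost_add_smul C (fun i => (hμ i).ne')
    (fun j => (hν j).ne') (fun i j => (hPpos i j).ne') _)
  have hconst : ∑ i, ∑ j, u i * w j * ε = 0 := by
    simp only [← sum_mul, ← mul_sum, hw, mul_zero, zero_mul, sum_const_zero]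
  simp only [Matrix.vecMulVec_apply, mul_add, mul_one, sum_add_distrib, hconst, add_zero] at h
  simpa only [mul_add, sum_add_distrib] using h

lemma entropicDual_le_entropicCost (hε : 0 < ε) (hμ : ∀ i, 0 < μ i) (hν : ∀ j, 0 < ν j)
    (hμ1 : ∑ i, μ i = 1) {P : Matrix ι κ ℝ} (hP : P ∈ couplings μ ν) (f : ι → ℝ) (g : κ → ℝ) :
    entropicDual ε μ ν C f g ≤ entropicCost ε μ ν C P := by
  rw [entropicDual_eq_sum_sum ε μ ν C hP hμ1, entropicCost_eq_sum_sum]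
  refine sum_le_sum fun i _ => sum_le_sum fun j _ => ?_
  have h := mul_le_mul_of_nonneg_left (mul_le_mul_log_div_sub_add_mul_exp
    ((f i + g j - C i j) / ε) (hP.1 i j) (mul_pos (hμ i) (hν j))) hε.le
  rw [mul_left_comm, mul_div_cancel₀ _ hε.ne'] at h
  linarith

lemma entropicDual_eq_entropicCost (hε : ε ≠ 0) (hμ : ∀ i, 0 < μ i) (hν : ∀ j, 0 < ν j)
    (hμ1 : ∑ i, μ i = 1) {P : Matrix ι κ ℝ} (hP : P ∈ couplings μ ν) (hPpos : ∀ i j, 0 < P i j)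
    {f : ι → ℝ} {g : κ → ℝ} (hfg : ∀ i j, f i + g j = C i j + ε * log (P i j / (μ i * ν j))) :
    entropicDual ε μ ν C f g = entropicCost ε μ ν C P := by
  rw [entropicDual_eq_sum_sum ε μ ν C hP hμ1, entropicCost_eq_sum_sum]
  refine sum_congr rfl fun i _ => sum_congr rfl fun j _ => ?_
  have hc : 0 < μ i * ν j := mul_pos (hμ i) (hν j)
  rw [hfg, add_sub_cancel_left, mul_div_cancel_left₀ _ hε, exp_log (div_pos (hPpos i j) hc),
    div_mul_cancel₀ _ hc.ne']
  ring

end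

/-- discrete strong duality for ε-entropy-regularized optimal
transport: the primal minimum over couplings with marginals `μ, ν` equals the
dual supremum over potentials `(f, g)`, and both are attained. -/
theorem eot_strong_duality
    (n m : ℕ) (ε : ℝ) (hε : 0 < ε)
    (μ : Fin n → ℝ) (ν : Fin m → ℝ)
    (hμ : ∀ i, 0 < μ i) (hν : ∀ j, 0 < ν j)
    (hμ1 : ∑ i, μ i = 1) (hν1 : ∑ j, ν j = 1)
    (C : Matrix (Fin n) (Fin m) ℝ) :
    ∃ p : ℝ,
      IsLeast {x : ℝ | ∃ P : Matrix (Fin n) (Fin m) ℝ,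
          (∀ i j, 0 ≤ P i j) ∧ (∀ i, ∑ j, P i j = μ i) ∧ (∀ j, ∑ i, P i j = ν j) ∧
          x = (∑ i, ∑ j, C i j * P i j)
            + ε * ∑ i, ∑ j, P i j * Real.log (P i j / (μ i * ν j))} p ∧
      IsGreatest {x : ℝ | ∃ (f : Fin n → ℝ) (g : Fin m → ℝ),
          x = (∑ i, f i * μ i) + (∑ j, g j * ν j)
            - ε * (∑ i, ∑ j, Real.exp ((f i + g j - C i j) / ε) * (μ i * ν j))
            + ε} p := by
  obtain ⟨P, hP, hmin⟩ :=
    exists_isMinOn_entropicCost C (fun i => (hμ i).le) (fun j => (hν j).le) hμ1 hν1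
  have hPpos := pos_of_isMinOn_entropicCost C hε hμ hν hμ1 hν1 hP hmin
  obtain ⟨f, g, hfg⟩ := exists_eq_add_of_sum_sum_mul_eq_zero _ fun u w hu hw =>
    sum_sum_mul_eq_zero_of_isMinOn C hμ hν hP hPpos hmin hu hw
  have hdual := entropicDual_eq_entropicCost C hε.ne' hμ hν hμ1 hP hPpos fun i j => (hfg i j).symm
  refine ⟨entropicCost ε μ ν C P, ⟨⟨P, hP.1, hP.2.1, hP.2.2, rfl⟩, ?_⟩, ⟨⟨f, g, hdual.symm⟩, ?_⟩⟩
  · rintro x ⟨Q, hQ0, hQr, hQc, rfl⟩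
    exact hmin ⟨hQ0, hQr, hQc⟩
  · rintro x ⟨f', g', rfl⟩
    exact entropicDual_le_entropicCost C hε hμ hν hμ1 hP f' g'
end

section
/- Let X be a metric space, let (Y, ν) be a probability measure space, let c : X × Y → ℝ be bounded and measurable in y for each x, and let g : Y → ℝ be bounded measurable. Define the soft c-transform operator T by T(g)(x) = log ∫_Y exp( -c(x, y) + g(y) ) dν(y). Then for all x, x' ∈ X, | T(g)(x) - T(g)(x') | ≤ sup_{y ∈ Y} | c(x, y) - c(x', y) |. In particular, when X and Y are compact and c is continuous (hence uniformly continuous on X × Y), the family { T(g) : g bounded measurable } is equicontinuous on X. -/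
/-!
Shifting the exponent `-c(x, y) + g(y)` by at most `S := sup_y |c(x, y) - c(x', y)|` scales the
integrand by at most `e^S`, so its integral changes by at most that factor and its logarithm
by at most `S`: the log-partition functional `u ↦ log ∫ exp u` is 1-Lipschitz for the sup norm.
-/

open MeasureTheory

namespace SoftCTransform

theorem bddAbove_range_abs_sub {ι : Type*} {a b : ι → ℝ} {M : ℝ} (ha : ∀ y, |a y| ≤ M)
    (hb : ∀ y, |b y| ≤ M) : BddAbove (Set.range fun y => |a y - b y|) :=
  ⟨M + M, Set.forall_mem_range.2 fun y => (abs_sub (a y) (b y)).trans (add_le_add (ha y) (hb y))⟩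

variable {Y : Type*} [MeasurableSpace Y] {μ : Measure Y}

theorem integrable_exp_of_le [IsFiniteMeasure μ] {u : Y → ℝ} (hu : Measurable u) {K : ℝ}
    (hK : ∀ y, u y ≤ K) : Integrable (fun y => Real.exp (u y)) μ :=
  Integrable.of_bound (Real.measurable_exp.comp hu).aestronglyMeasurable (Real.exp K) <|
    .of_forall fun y => by
      rw [Real.norm_eq_abs, Real.abs_exp]
      exact Real.exp_le_exp.2 (hK y)

theorem log_integral_exp_le_add [NeZero μ] {u v : Y → ℝ}
    (hu : Integrable (fun y => Real.exp (u y)) μ) (hv : Integrable (fun y => Real.exp (v y)) μ)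
    {S : ℝ} (huv : ∀ y, u y ≤ v y + S) :
    Real.log (∫ y, Real.exp (u y) ∂μ) ≤ Real.log (∫ y, Real.exp (v y) ∂μ) + S := by
  have hint_le : ∫ y, Real.exp (u y) ∂μ ≤ (∫ y, Real.exp (v y) ∂μ) * Real.exp S := by
    rw [← integral_mul_const]
    refine integral_mono hu (hv.mul_const _) fun y => ?_
    rw [← Real.exp_add]
    exact Real.exp_le_exp.2 (huv y)
  calc Real.log (∫ y, Real.exp (u y) ∂μ)
      ≤ Real.log ((∫ y, Real.exp (v y) ∂μ) * Real.exp S) :=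
        Real.log_le_log (integral_exp_pos hu) hint_le
    _ = Real.log (∫ y, Real.exp (v y) ∂μ) + S := by
        rw [Real.log_mul (integral_exp_pos hv).ne' (Real.exp_ne_zero S), Real.log_exp]

theorem abs_log_integral_exp_sub_le [NeZero μ] {u v : Y → ℝ}
    (hu : Integrable (fun y => Real.exp (u y)) μ) (hv : Integrable (fun y => Real.exp (v y)) μ)
    {S : ℝ} (huv : ∀ y, |u y - v y| ≤ S) :
    |Real.log (∫ y, Real.exp (u y) ∂μ) - Real.log (∫ y, Real.exp (v y) ∂μ)| ≤ S := by
  rw [abs_sub_le_iff, sub_le_iff_le_add', sub_le_iff_le_add']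
  constructor
  · exact log_integral_exp_le_add hu hv fun y => by linarith [(abs_le.1 (huv y)).2]
  · exact log_integral_exp_le_add hv hu fun y => by linarith [(abs_le.1 (huv y)).1]

end SoftCTransform

open SoftCTransform in
theorem soft_c_transform_equicontinuous_general
    {X Y : Type*} [MeasurableSpace Y]
    (ν : Measure Y) [IsProbabilityMeasure ν]
    (c : X × Y → ℝ) (M : ℝ)
    (hcb : ∀ x y, |c (x, y)| ≤ M)
    (hcm : ∀ x, Measurable fun y => c (x, y))
    (g : Y → ℝ) (hgm : Measurable g) (Mg : ℝ) (hgb : ∀ y, |g y| ≤ Mg)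
    (T : (Y → ℝ) → X → ℝ)
    (hT : ∀ x, T g x = Real.log (∫ y, Real.exp (-c (x, y) + g y) ∂ν)) :
    ∀ x x', |T g x - T g x'| ≤ ⨆ y, |c (x, y) - c (x', y)| := by
  have hint : ∀ x, Integrable (fun y => Real.exp (-c (x, y) + g y)) ν := fun x =>
    integrable_exp_of_le ((hcm x).neg.add hgm) (K := M + Mg) fun y => by
      linarith [(abs_le.1 (hcb x y)).1, (abs_le.1 (hgb y)).2]
  intro x x'
  rw [hT, hT]
  refine abs_log_integral_exp_sub_le (hint x) (hint x') fun y => ?_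
  rw [show -c (x, y) + g y - (-c (x', y) + g y) = -(c (x, y) - c (x', y)) by ring, abs_neg]
  exact le_ciSup (bddAbove_range_abs_sub (hcb x) (hcb x')) y

/-- the soft (entropic) c-transform
`T(g)(x) = log ∫ exp(-c(x,y) + g(y)) dν(y)` satisfies
`|T(g)(x) - T(g)(x')| ≤ sup_y |c(x,y) - c(x',y)|` for bounded measurable data,
which yields equicontinuity of its image when `c` is uniformly continuous. -/
theorem soft_c_transform_equicontinuous
    {X Y : Type*} [MetricSpace X] [MeasurableSpace Y]
    (ν : Measure Y) [IsProbabilityMeasure ν]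
    (c : X × Y → ℝ) (M : ℝ)
    (hcb : ∀ x y, |c (x, y)| ≤ M)
    (hcm : ∀ x, Measurable fun y => c (x, y))
    (g : Y → ℝ) (hgm : Measurable g) (Mg : ℝ) (hgb : ∀ y, |g y| ≤ Mg)
    (T : (Y → ℝ) → X → ℝ)
    (hT : ∀ x, T g x = Real.log (∫ y, Real.exp (-c (x, y) + g y) ∂ν)) :
    ∀ x x', |T g x - T g x'| ≤ ⨆ y, |c (x, y) - c (x', y)| :=
  soft_c_transform_equicontinuous_general ν c M hcb hcm g hgm Mg hgb T hT
end
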